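/- arXiv:2105.09080 — 2 statements merged into one kernel-verified Lean document; each statement's English description precedes it below -/
import Mathlib

section
/- (Descent lemma, non-convex case.) Under the stated assumptions (L-smoothness, gradient-noise conditions, and mixing matrix conditions), if the step-size satisfies γ < 1/(4L), then for every k = 1, 2, … the Gossip-PGA iterates satisfy E f(x̄^{(k)}) ≤ E f(x̄^{(k−1)}) − (γ/4)·E‖∇f(x̄^{(k−1)})‖² + γ²·L·σ²/(2n) + (3·γ·L²/(4n))·E‖X^{(k−1)} − X̄^{(k−1)}‖_F². -/
open MeasureTheory Finset
open scoped RealInnerProductSpace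

/-!
Both the gossip step (`W` is column stochastic) and the global averaging step preserve the
network average, so `x̄⁽ᵏ⁺¹⁾ = x̄⁽ᵏ⁾ - γ (b + ξ)` with `b = (1/n) ∑ ∇fᵢ(xᵢ⁽ᵏ⁾)` and `ξ` the averaged
gradient noise: the average performs an inexact SGD step on `f = (1/n) ∑ fᵢ`. The quadratic upper
bound of an `L`-smooth function, the polarization
`2⟪∇f(x̄), b⟫ = ‖∇f(x̄)‖² + ‖b‖² - ‖∇f(x̄) - b‖²` and `γL ≤ 1` give a pointwise bound in which `ξ`
enters only through `‖ξ‖²` and through its inner product with an `F⁽ᵏ⁾`-measurable vector, whose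
mean vanishes by the pull-out property. The noises of different nodes are conditionally
uncorrelated, so `E‖ξ‖² ≤ σ²/n`, and smoothness with Cauchy–Schwarz gives
`‖∇f(x̄) - b‖² ≤ (L²/n) ‖X - X̄‖_F²`.
-/

section Smooth

variable {E : Type*} [NormedAddCommGroup E] [InnerProductSpace ℝ E] [CompleteSpace E]
  {F : E → ℝ} {G : E → E} {L γ : ℝ}

theorem le_add_inner_add_of_lipschitz_gradient (hF : ∀ z, HasGradientAt F (G z) z)
    (hG : ∀ y z, ‖G y - G z‖ ≤ L * ‖y - z‖) (x v : E) :
    F (x + v) ≤ F x + ⟪G x, v⟫ + L / 2 * ‖v‖ ^ 2 := by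
  set φ : ℝ → ℝ := fun t => F (x + t • v) - t * ⟪G x, v⟫ - L / 2 * t ^ 2 * ‖v‖ ^ 2
  have hφ : ∀ t, HasDerivAt φ (⟪G (x + t • v), v⟫ - ⟪G x, v⟫ - L * t * ‖v‖ ^ 2) t := by
    intro t
    have hline : HasDerivAt (fun t : ℝ => x + t • v) v t := by
      simpa using ((hasDerivAt_id t).smul_const v).const_add x
    have hFline := (hF (x + t • v)).hasFDerivAt.comp_hasDerivAt t hline
    simp only [InnerProductSpace.toDual_apply_apply] at hFline
    refine ((hFline.sub ((hasDerivAt_id t).mul_const _)).sub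
      (((hasDerivAt_pow 2 t).const_mul (L / 2)).mul_const _)).congr_deriv ?_
    simp only [Nat.cast_ofNat]
    ring
  have hanti : AntitoneOn φ (Set.Ici 0) := by
    refine antitoneOn_of_hasDerivWithinAt_nonpos (convex_Ici 0)
      (fun t _ => (hφ t).continuousAt.continuousWithinAt) (fun t _ => (hφ t).hasDerivWithinAt)
      fun t ht => ?_
    rw [interior_Ici, Set.mem_Ioi] at ht
    have hlip : ⟪G (x + t • v) - G x, v⟫ ≤ L * t * ‖v‖ ^ 2 :=
      calc ⟪G (x + t • v) - G x, v⟫ ≤ ‖G (x + t • v) - G x‖ * ‖v‖ := real_inner_le_norm _ _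
        _ ≤ L * ‖t • v‖ * ‖v‖ := by
          gcongr
          simpa using hG (x + t • v) x
        _ = L * t * ‖v‖ ^ 2 := by rw [norm_smul, Real.norm_of_nonneg ht.le]; ring
    rw [inner_sub_left] at hlip
    linarith
  have := hanti Set.self_mem_Ici (Set.mem_Ici.mpr zero_le_one) zero_le_one
  simp only [φ, zero_smul, add_zero, one_smul] at this
  linarith

theorem le_sub_sq_norm_of_inexact_gradient_step (hF : ∀ z, HasGradientAt F (G z) z)
    (hG : ∀ y z, ‖G y - G z‖ ≤ L * ‖y - z‖) (hγ : 0 ≤ γ) (hLγ : L * γ ≤ 1) (x b c : E) :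
    F (x - γ • (b + c)) ≤ F x - γ / 2 * ‖G x‖ ^ 2 + γ / 2 * ‖G x - b‖ ^ 2
      + ⟪(L * γ ^ 2) • b - γ • G x, c⟫ + L * γ ^ 2 / 2 * ‖c‖ ^ 2 := by
  have hdesc := le_add_inner_add_of_lipschitz_gradient hF hG x (-(γ • (b + c)))
  rw [← sub_eq_add_neg, inner_neg_right, norm_neg, inner_smul_right, inner_add_right,
    norm_smul, mul_pow, Real.norm_eq_abs, sq_abs, norm_add_sq_real] at hdesc
  have hpol := norm_sub_sq_real (G x) b
  rw [inner_sub_left, inner_smul_left, inner_smul_left]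
  simp only [conj_trivial]
  nlinarith [mul_nonneg (mul_nonneg hγ (sub_nonneg.mpr hLγ)) (sq_nonneg ‖b‖)]

end Smooth

section Average

variable {E : Type*} [NormedAddCommGroup E] [NormedSpace ℝ E] {n : ℕ}

noncomputable def avg (v : Fin n → E) : E := (n : ℝ)⁻¹ • ∑ i, v i

theorem avg_add (a b : Fin n → E) : avg (fun i => a i + b i) = avg a + avg b := by
  simp only [avg, sum_add_distrib, smul_add]

theorem avg_sub (a b : Fin n → E) : avg (fun i => a i - b i) = avg a - avg b := by
  simp only [avg, sum_sub_distrib, smul_sub]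

theorem avg_smul (c : ℝ) (a : Fin n → E) : avg (fun i => c • a i) = c • avg a := by
  simp only [avg, ← smul_sum, smul_comm c]

theorem avg_const (hn : 0 < n) (c : E) : avg (fun _ : Fin n => c) = c := by
  rw [avg, sum_const, card_univ, Fintype.card_fin, ← Nat.cast_smul_eq_nsmul ℝ, smul_smul,
    inv_mul_cancel₀ (Nat.cast_ne_zero.mpr hn.ne'), one_smul]

theorem avg_mix {W : Matrix (Fin n) (Fin n) ℝ} (hW : ∀ j, ∑ i, W i j = 1) (v : Fin n → E) :
    avg (fun i => ∑ j, W i j • v j) = avg v := by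
  simp only [avg, sum_comm (γ := Fin n), ← sum_smul, hW, one_smul]

theorem norm_avg_sub_avg_le (a b : Fin n → E) :
    ‖avg a - avg b‖ ≤ (n : ℝ)⁻¹ * ∑ i, ‖a i - b i‖ := by
  rw [← avg_sub, avg, norm_smul, Real.norm_of_nonneg (by positivity)]
  gcongr
  exact norm_sum_le _ _

end Average

section AverageGradient

variable {E : Type*} [NormedAddCommGroup E] [InnerProductSpace ℝ E] {n : ℕ}
  {grad : Fin n → E → E} {L : ℝ}

theorem norm_avg_gradient_sub_le (hn : 0 < n) (hgrad : ∀ i y z, ‖grad i y - grad i z‖ ≤ L * ‖y - z‖)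
    (y z : E) : ‖avg (fun i => grad i y) - avg (fun i => grad i z)‖ ≤ L * ‖y - z‖ := by
  refine (norm_avg_sub_avg_le _ _).trans ?_
  calc (n : ℝ)⁻¹ * ∑ i, ‖grad i y - grad i z‖ ≤ (n : ℝ)⁻¹ * ∑ _i : Fin n, L * ‖y - z‖ := by
        gcongr with i; exact hgrad i y z
    _ = L * ‖y - z‖ := by
        rw [sum_const, card_univ, Fintype.card_fin, nsmul_eq_mul, ← mul_assoc,
          inv_mul_cancel₀ (Nat.cast_ne_zero.mpr hn.ne'), one_mul]

theorem sq_norm_avg_gradient_sub_le (hgrad : ∀ i y z, ‖grad i y - grad i z‖ ≤ L * ‖y - z‖)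
    (z : E) (y : Fin n → E) :
    ‖avg (fun i => grad i z) - avg (fun i => grad i (y i))‖ ^ 2
      ≤ L ^ 2 / n * ∑ i, ‖y i - z‖ ^ 2 := by
  have hcs := sq_sum_le_card_mul_sum_sq (s := univ) (f := fun i => L * ‖y i - z‖)
  rw [card_univ, Fintype.card_fin] at hcs
  calc ‖avg (fun i => grad i z) - avg (fun i => grad i (y i))‖ ^ 2
      ≤ ((n : ℝ)⁻¹ * ∑ i, L * ‖y i - z‖) ^ 2 := by
        gcongr
        refine (norm_avg_sub_avg_le _ _).trans ?_
        gcongr with i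
        rw [norm_sub_rev (y i)]
        exact hgrad i z (y i)
    _ = (n : ℝ)⁻¹ ^ 2 * (∑ i, L * ‖y i - z‖) ^ 2 := by ring
    _ ≤ (n : ℝ)⁻¹ ^ 2 * (n * ∑ i, (L * ‖y i - z‖) ^ 2) := by gcongr
    _ = L ^ 2 / n * ∑ i, ‖y i - z‖ ^ 2 := by
        rcases n.eq_zero_or_pos with rfl | hn
        · simp
        · simp only [mul_pow, ← mul_sum]
          field_simp

theorem hasGradientAt_avg [CompleteSpace E] {f : Fin n → E → ℝ}
    (hf : ∀ i z, HasGradientAt (f i) (grad i z) z) (z : E) :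
    HasGradientAt (fun y => (n : ℝ)⁻¹ * ∑ i, f i y) (avg (fun i => grad i z)) z := by
  have hsum : HasFDerivAt (fun y => (n : ℝ)⁻¹ * ∑ i, f i y)
      ((n : ℝ)⁻¹ • ∑ i, InnerProductSpace.toDual ℝ E (grad i z)) z := by
    exact (HasFDerivAt.fun_sum fun i _ => (hf i z).hasFDerivAt).const_smul (n : ℝ)⁻¹
  simpa [avg, map_sum, map_smul] using hasFDerivAt_iff_hasGradientAt.mp hsum

end AverageGradient

section Probability

variable {Ω : Type*} {m m0 : MeasurableSpace Ω} {μ : Measure Ω} {E : Type*} [NormedAddCommGroup E]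

theorem MeasureTheory.MemLp.integrable_sq_norm {f : Ω → E} (hf : MemLp f 2 μ) :
    Integrable (fun ω => ‖f ω‖ ^ 2) μ :=
  (memLp_two_iff_integrable_sq_norm hf.1).1 hf

theorem LipschitzWith.of_norm_sub_le' {F : Type*} [NormedAddCommGroup F] {g : E → F} {K : ℝ}
    (hg : ∀ y z, ‖g y - g z‖ ≤ K * ‖y - z‖) : LipschitzWith (Real.toNNReal K) g :=
  .of_dist_le' fun y z => by simpa only [dist_eq_norm] using hg y z

theorem LipschitzWith.memLp_comp [IsFiniteMeasure μ] {F : Type*} [NormedAddCommGroup F]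
    {K : NNReal} {g : E → F} (hg : LipschitzWith K g) {f : Ω → E} {p : ENNReal}
    (hf : MemLp f p μ) : MemLp (fun ω => g (f ω)) p μ := by
  have hg0 : LipschitzWith K (fun z => g z - g 0) := by
    refine LipschitzWith.of_dist_le_mul fun y z => ?_
    rw [dist_sub_right]
    exact hg.dist_le_mul y z
  convert (hg0.comp_memLp (by simp) hf).add (memLp_const (g 0)) using 1
  ext ω
  simp

theorem integral_eq_zero_of_condExp_eq_zero {F : Type*} [NormedAddCommGroup F] [NormedSpace ℝ F]
    [CompleteSpace F] (hm : m ≤ m0) [SigmaFinite (μ.trim hm)] {f : Ω → F}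
    (hf : μ[f|m] =ᵐ[μ] 0) : ∫ ω, f ω ∂μ = 0 := by
  rw [← integral_condExp hm, integral_congr_ae hf, integral_zero']

theorem integral_le_of_condExp_le [IsProbabilityMeasure μ] (hm : m ≤ m0) {f : Ω → ℝ} {c : ℝ}
    (hf : ∀ᵐ ω ∂μ, μ[f|m] ω ≤ c) : ∫ ω, f ω ∂μ ≤ c := by
  rw [← integral_condExp hm]
  simpa using integral_mono_ae integrable_condExp (integrable_const c) hf

variable [InnerProductSpace ℝ E]

theorem MeasureTheory.MemLp.integrable_inner {f g : Ω → E} (hf : MemLp f 2 μ)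
    (hg : MemLp g 2 μ) : Integrable (fun ω => ⟪f ω, g ω⟫) μ :=
  memLp_one_iff_integrable.1 ((innerSL ℝ (E := E)).memLp_of_bilin 1 hf hg)

theorem integral_inner_eq_zero_of_condExp_eq_zero [CompleteSpace E] [IsFiniteMeasure μ]
    (hm : m ≤ m0) {A N : Ω → E} (hA : StronglyMeasurable[m] A)
    (hAN : Integrable (fun ω => ⟪A ω, N ω⟫) μ) (hN : Integrable N μ) (hN0 : μ[N|m] =ᵐ[μ] 0) :
    ∫ ω, ⟪A ω, N ω⟫ ∂μ = 0 := by
  refine integral_eq_zero_of_condExp_eq_zero hm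
    ((condExp_bilin_of_stronglyMeasurable_left (innerSL ℝ (E := E)) hA hAN hN).trans ?_)
  filter_upwards [hN0] with ω hω
  simp [hω]

theorem integral_sq_norm_sum_of_orthogonal {ι : Type*} [Fintype ι] {N : ι → Ω → E}
    (hN : ∀ i, MemLp (N i) 2 μ) (horth : ∀ i j, i ≠ j → ∫ ω, ⟪N i ω, N j ω⟫ ∂μ = 0) :
    ∫ ω, ‖∑ i, N i ω‖ ^ 2 ∂μ = ∑ i, ∫ ω, ‖N i ω‖ ^ 2 ∂μ := by
  have hint : ∀ i j, Integrable (fun ω => ⟪N i ω, N j ω⟫) μ := fun i j =>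
    (hN i).integrable_inner (hN j)
  simp_rw [← real_inner_self_eq_norm_sq, sum_inner, inner_sum]
  rw [integral_finsetSum _ fun i _ => integrable_finsetSum _ fun j _ => hint i j]
  refine sum_congr rfl fun i _ => ?_
  rw [integral_finsetSum _ fun j _ => hint i j,
    sum_eq_single i (fun j _ hji => horth i j hji.symm) (by simp)]

end Probability

section StochasticStep

variable {Ω : Type*} {m m0 : MeasurableSpace Ω} {μ : Measure Ω} [IsFiniteMeasure μ]
  {E : Type*} [NormedAddCommGroup E] [InnerProductSpace ℝ E] [CompleteSpace E]
  {F : E → ℝ} {G : E → E} {L γ : ℝ}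

theorem integral_comp_inexact_gradient_step_le (hm : m ≤ m0)
    (hF : ∀ z, HasGradientAt F (G z) z) (hG : ∀ y z, ‖G y - G z‖ ≤ L * ‖y - z‖)
    (hγ : 0 ≤ γ) (hLγ : L * γ ≤ 1) {X B N : Ω → E}
    (hXm : StronglyMeasurable[m] X) (hBm : StronglyMeasurable[m] B)
    (hX : MemLp X 2 μ) (hB : MemLp B 2 μ) (hN : MemLp N 2 μ) (hN0 : μ[N|m] =ᵐ[μ] 0)
    (hFX : Integrable (fun ω => F (X ω)) μ)
    (hFX' : Integrable (fun ω => F (X ω - γ • (B ω + N ω))) μ) :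
    ∫ ω, F (X ω - γ • (B ω + N ω)) ∂μ ≤ ∫ ω, F (X ω) ∂μ - γ / 2 * ∫ ω, ‖G (X ω)‖ ^ 2 ∂μ
      + γ / 2 * ∫ ω, ‖G (X ω) - B ω‖ ^ 2 ∂μ + L * γ ^ 2 / 2 * ∫ ω, ‖N ω‖ ^ 2 ∂μ := by
  have hGlip := LipschitzWith.of_norm_sub_le' hG
  have hGX : MemLp (fun ω => G (X ω)) 2 μ := hGlip.memLp_comp hX
  have hGXm : StronglyMeasurable[m] (fun ω => G (X ω)) :=
    hGlip.continuous.comp_stronglyMeasurable hXm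
  -- the noise enters linearly only through this `m`-measurable direction
  set A : Ω → E := fun ω => (L * γ ^ 2) • B ω - γ • G (X ω)
  have hAN : Integrable (fun ω => ⟪A ω, N ω⟫) μ :=
    ((hB.const_smul _).sub (hGX.const_smul _)).integrable_inner hN
  have hcross : ∫ ω, ⟪A ω, N ω⟫ ∂μ = 0 :=
    integral_inner_eq_zero_of_condExp_eq_zero hm ((hBm.const_smul _).sub (hGXm.const_smul _))
      hAN (hN.integrable one_le_two) hN0
  have hint_grad : Integrable (fun ω => γ / 2 * ‖G (X ω)‖ ^ 2) μ :=
    hGX.integrable_sq_norm.const_mul _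
  have hint_bias : Integrable (fun ω => γ / 2 * ‖G (X ω) - B ω‖ ^ 2) μ :=
    (hGX.sub hB).integrable_sq_norm.const_mul _
  have hint_noise : Integrable (fun ω => L * γ ^ 2 / 2 * ‖N ω‖ ^ 2) μ :=
    hN.integrable_sq_norm.const_mul _
  have hint_det := (hFX.sub' hint_grad).fun_add hint_bias
  calc ∫ ω, F (X ω - γ • (B ω + N ω)) ∂μ
      ≤ ∫ ω, (F (X ω) - γ / 2 * ‖G (X ω)‖ ^ 2 + γ / 2 * ‖G (X ω) - B ω‖ ^ 2
          + ⟪A ω, N ω⟫ + L * γ ^ 2 / 2 * ‖N ω‖ ^ 2) ∂μ :=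
        integral_mono hFX' ((hint_det.fun_add hAN).fun_add hint_noise) fun ω =>
          le_sub_sq_norm_of_inexact_gradient_step hF hG hγ hLγ _ _ _
    _ = _ := by
        rw [integral_add (hint_det.fun_add hAN) hint_noise, integral_add hint_det hAN, hcross,
          integral_add (hFX.sub' hint_grad) hint_bias, integral_sub hFX hint_grad,
          integral_const_mul,
          integral_const_mul, integral_const_mul, add_zero]

end StochasticStep

section AverageProbability

variable {Ω : Type*} {m m0 : MeasurableSpace Ω} {μ : Measure Ω} {n : ℕ}
  {E : Type*} [NormedAddCommGroup E] [NormedSpace ℝ E] {N : Fin n → Ω → E}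

theorem stronglyMeasurable_avg (hN : ∀ i, StronglyMeasurable[m] (N i)) :
    StronglyMeasurable[m] (fun ω => avg (fun i => N i ω)) :=
  (stronglyMeasurable_fun_sum univ fun i _ => hN i).const_smul _

theorem memLp_avg {p : ENNReal} (hN : ∀ i, MemLp (N i) p μ) :
    MemLp (fun ω => avg (fun i => N i ω)) p μ :=
  (memLp_finsetSum univ fun i _ => hN i).const_smul _

theorem condExp_avg_eq_zero [CompleteSpace E] (hN : ∀ i, Integrable (N i) μ)
    (hN0 : ∀ i, μ[N i|m] =ᵐ[μ] 0) : μ[fun ω => avg (fun i => N i ω)|m] =ᵐ[μ] 0 := by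
  have hsum : (fun ω => avg (fun i => N i ω)) = (n : ℝ)⁻¹ • ∑ i, N i := by
    ext ω
    simp [avg, Finset.sum_apply]
  rw [hsum]
  refine (condExp_smul _ _ _).trans ?_
  filter_upwards [condExp_finsetSum (s := univ) (fun i _ => hN i) m, ae_all_iff.mpr hN0]
    with ω hsum h0
  simp [hsum, Finset.sum_apply, h0]

end AverageProbability

section NetworkStep

variable {Ω : Type*} {m m0 : MeasurableSpace Ω} {μ : Measure Ω} {n : ℕ}
  {E : Type*} [NormedAddCommGroup E] [InnerProductSpace ℝ E] {grad : Fin n → E → E} {L γ : ℝ}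

theorem integral_sq_norm_avg_le {σ : ℝ} {N : Fin n → Ω → E} (hN : ∀ i, MemLp (N i) 2 μ)
    (hvar : ∀ i, ∫ ω, ‖N i ω‖ ^ 2 ∂μ ≤ σ ^ 2)
    (horth : ∀ i j, i ≠ j → ∫ ω, ⟪N i ω, N j ω⟫ ∂μ = 0) :
    ∫ ω, ‖avg (fun i => N i ω)‖ ^ 2 ∂μ ≤ σ ^ 2 / n := by
  have hsq : ∀ ω, ‖avg (fun i => N i ω)‖ ^ 2 = (n : ℝ)⁻¹ ^ 2 * ‖∑ i, N i ω‖ ^ 2 := fun ω => by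
    rw [avg, norm_smul, mul_pow, Real.norm_of_nonneg (by positivity)]
  simp_rw [hsq]
  rw [integral_const_mul, integral_sq_norm_sum_of_orthogonal hN horth]
  calc (n : ℝ)⁻¹ ^ 2 * ∑ i, ∫ ω, ‖N i ω‖ ^ 2 ∂μ ≤ (n : ℝ)⁻¹ ^ 2 * ∑ _i : Fin n, σ ^ 2 := by
        gcongr with i; exact hvar i
    _ = σ ^ 2 / n := by
        rw [sum_const, card_univ, Fintype.card_fin, nsmul_eq_mul]
        rcases n.eq_zero_or_pos with rfl | hn
        · simp
        · field_simp

theorem integral_sq_norm_avg_gradient_sub_le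
    (hgrad : ∀ i y z, ‖grad i y - grad i z‖ ≤ L * ‖y - z‖) {x : Fin n → Ω → E}
    (hx : ∀ i, MemLp (x i) 2 μ) :
    ∫ ω, ‖avg (fun i => grad i (avg fun j => x j ω)) - avg (fun i => grad i (x i ω))‖ ^ 2 ∂μ
      ≤ L ^ 2 / n * ∫ ω, ∑ i, ‖x i ω - avg (fun j => x j ω)‖ ^ 2 ∂μ := by
  rw [← integral_const_mul]
  refine integral_mono_of_nonneg (ae_of_all _ fun ω => by positivity) ?_
    (ae_of_all _ fun ω => sq_norm_avg_gradient_sub_le hgrad _ _)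
  exact (integrable_finsetSum _ fun i _ =>
    ((hx i).sub (memLp_avg hx)).integrable_sq_norm).const_mul _

theorem integral_avg_sgd_step_le [IsProbabilityMeasure μ] [CompleteSpace E] (hm : m ≤ m0)
    (hn : 0 < n) {f : Fin n → E → ℝ} (hf : ∀ i z, HasGradientAt (f i) (grad i z) z)
    (hgrad : ∀ i y z, ‖grad i y - grad i z‖ ≤ L * ‖y - z‖) (hL : 0 ≤ L) (hγ : 0 ≤ γ)
    (hLγ : L * γ ≤ 1) {σ : ℝ} {x g : Fin n → Ω → E} (hxm : ∀ i, StronglyMeasurable[m] (x i))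
    (hx : ∀ i, MemLp (x i) 2 μ) (hg : ∀ i, MemLp (g i) 2 μ)
    (hmean : ∀ i, μ[fun ω => g i ω - grad i (x i ω)|m] =ᵐ[μ] 0)
    (hvar : ∀ i, ∀ᵐ ω ∂μ, μ[fun ω => ‖g i ω - grad i (x i ω)‖ ^ 2|m] ω ≤ σ ^ 2)
    (hindep : ∀ i j, i ≠ j →
      μ[fun ω => ⟪g i ω - grad i (x i ω), g j ω - grad j (x j ω)⟫|m] =ᵐ[μ] 0)
    (hFx : Integrable (fun ω => (n : ℝ)⁻¹ * ∑ i, f i (avg fun j => x j ω)) μ)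
    (hFx' : Integrable (fun ω => (n : ℝ)⁻¹ * ∑ i, f i (avg fun j => x j ω - γ • g j ω)) μ) :
    ∫ ω, (n : ℝ)⁻¹ * ∑ i, f i (avg fun j => x j ω - γ • g j ω) ∂μ
      ≤ ∫ ω, (n : ℝ)⁻¹ * ∑ i, f i (avg fun j => x j ω) ∂μ
        - γ / 2 * ∫ ω, ‖avg (fun i => grad i (avg fun j => x j ω))‖ ^ 2 ∂μ
        + L * γ ^ 2 / 2 * (σ ^ 2 / n)
        + γ / 2 * (L ^ 2 / n) * ∫ ω, ∑ i, ‖x i ω - avg (fun j => x j ω)‖ ^ 2 ∂μ := by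
  have hgradx : ∀ i, MemLp (fun ω => grad i (x i ω)) 2 μ := fun i =>
    (LipschitzWith.of_norm_sub_le' (hgrad i)).memLp_comp (hx i)
  have hnoise : ∀ i, MemLp (fun ω => g i ω - grad i (x i ω)) 2 μ := fun i =>
    (hg i).sub (hgradx i)
  have hsplit : ∀ ω, avg (fun j => x j ω - γ • g j ω) = avg (fun j => x j ω)
      - γ • (avg (fun i => grad i (x i ω)) + avg (fun i => g i ω - grad i (x i ω))) := by
    intro ω
    rw [avg_sub, avg_smul, ← avg_add]
    simp only [add_sub_cancel]
  simp_rw [hsplit] at hFx' ⊢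
  have hdesc := integral_comp_inexact_gradient_step_le hm (hasGradientAt_avg hf)
    (norm_avg_gradient_sub_le hn hgrad) hγ hLγ (stronglyMeasurable_avg hxm)
    (stronglyMeasurable_avg fun i =>
      (LipschitzWith.of_norm_sub_le' (hgrad i)).continuous.comp_stronglyMeasurable (hxm i))
    (memLp_avg hx) (memLp_avg hgradx) (memLp_avg hnoise)
    (condExp_avg_eq_zero (fun i => (hnoise i).integrable one_le_two) hmean) hFx hFx'
  have hbias := mul_le_mul_of_nonneg_left (integral_sq_norm_avg_gradient_sub_le hgrad hx)
    (by positivity : 0 ≤ γ / 2)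
  have hnoise_var := mul_le_mul_of_nonneg_left (integral_sq_norm_avg_le hnoise
    (fun i => integral_le_of_condExp_le hm (hvar i))
    (fun i j hij => integral_eq_zero_of_condExp_eq_zero hm (hindep i j hij)))
    (by positivity : 0 ≤ L * γ ^ 2 / 2)
  linarith

end NetworkStep

theorem gossip_pga_descent_lemma_nonconvex_general
    {Ω : Type*} [mΩ : MeasurableSpace Ω] (μ : Measure Ω) [IsProbabilityMeasure μ]
    (d n : ℕ) (hn : 0 < n)
    (f : Fin n → EuclideanSpace ℝ (Fin d) → ℝ)
    (grad : Fin n → EuclideanSpace ℝ (Fin d) → EuclideanSpace ℝ (Fin d))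
    (L σ γ : ℝ) (H : ℕ)
    (hL : 0 < L) (hγ0 : 0 < γ)
    -- smoothness
    (hdiff : ∀ i z, HasGradientAt (f i) (grad i z) z)
    (hsmooth : ∀ i y z, ‖grad i y - grad i z‖ ≤ L * ‖y - z‖)
    -- mixing matrix assumptions
    (W : Matrix (Fin n) (Fin n) ℝ)
    (hWcol : ∀ j, ∑ i, W i j = 1)
    -- the stochastic process: iterates and stochastic gradients, with their filtration
    (ℱ : ℕ → MeasurableSpace Ω) (hℱle : ∀ k, ℱ k ≤ mΩ)
    (x g : ℕ → Fin n → Ω → EuclideanSpace ℝ (Fin d))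
    (hx_adapted : ∀ k i, StronglyMeasurable[ℱ k] (x k i))
    (hx_L2 : ∀ k i, MemLp (x k i) 2 μ)
    (hg_L2 : ∀ k i, MemLp (g k i) 2 μ)
    -- gradient-noise assumptions
    (hmean : ∀ k i, μ[fun ω => g k i ω - grad i (x k i ω) | ℱ k] =ᵐ[μ] 0)
    (hvar : ∀ k i, ∀ᵐ ω ∂μ,
      (μ[fun ω => ‖g k i ω - grad i (x k i ω)‖ ^ 2 | ℱ k]) ω ≤ σ ^ 2)
    (hindep : ∀ k, ∀ i j, i ≠ j →
      μ[fun ω => ⟪g k i ω - grad i (x k i ω), g k j ω - grad j (x k j ω)⟫ | ℱ k]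
        =ᵐ[μ] 0)
    -- the Gossip-PGA recursion with averaging period `H`
    (hrec_gossip : ∀ k i ω, (k + 1) % H ≠ 0 →
      x (k + 1) i ω = ∑ j, W i j • (x k j ω - γ • g k j ω))
    (hrec_avg : ∀ k i ω, (k + 1) % H = 0 →
      x (k + 1) i ω = (n : ℝ)⁻¹ • ∑ j, (x k j ω - γ • g k j ω))
    -- integrability of the function values
    (hfint : ∀ k, Integrable
      (fun ω => (n : ℝ)⁻¹ * ∑ i, f i ((n : ℝ)⁻¹ • ∑ j, x k j ω)) μ)
    -- step-size condition
    (hγ : γ < 1 / (4 * L)) :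
    ∀ k : ℕ,
      (∫ ω, (n : ℝ)⁻¹ * ∑ i, f i ((n : ℝ)⁻¹ • ∑ j, x (k + 1) j ω) ∂μ) ≤
        (∫ ω, (n : ℝ)⁻¹ * ∑ i, f i ((n : ℝ)⁻¹ • ∑ j, x k j ω) ∂μ)
        - γ / 4 * (∫ ω, ‖(n : ℝ)⁻¹ • ∑ i, grad i ((n : ℝ)⁻¹ • ∑ j, x k j ω)‖ ^ 2 ∂μ)
        + γ ^ 2 * L * σ ^ 2 / (2 * n)
        + 3 * γ * L ^ 2 / (4 * n)
            * (∫ ω, (∑ i, ‖x k i ω - (n : ℝ)⁻¹ • ∑ j, x k j ω‖ ^ 2) ∂μ) := by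
  intro k
  have hLγ : L * γ ≤ 1 := by
    have := (lt_div_iff₀ (by positivity : (0 : ℝ) < 4 * L)).mp hγ
    nlinarith
  have hmix : ∀ ω, avg (fun j => x (k + 1) j ω) = avg (fun j => x k j ω - γ • g k j ω) := by
    intro ω
    rcases eq_or_ne ((k + 1) % H) 0 with h | h
    · simp_rw [hrec_avg k _ ω h]
      exact avg_const hn _
    · simp_rw [hrec_gossip k _ ω h]
      exact avg_mix hWcol _
  have hdesc := integral_avg_sgd_step_le (hℱle k) hn hdiff hsmooth hL.le hγ0.le hLγ (hx_adapted k)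
    (hx_L2 k) (hg_L2 k) (hmean k) (hvar k) (hindep k) (hfint k)
    (by simp_rw [← hmix]; exact hfint (k + 1))
  simp only [← hmix] at hdesc
  simp only [avg] at hdesc
  calc _ ≤ _ := hdesc
    _ ≤ _ := by
      gcongr
      · norm_num
      · exact le_of_eq (by ring)
      · rw [show 3 * γ * L ^ 2 / (4 * n) = 3 / 2 * (γ / 2 * (L ^ 2 / n)) by ring]
        exact le_mul_of_one_le_left (by positivity) (by norm_num)

/-- **Descent lemma for Gossip-PGA, non-convex case.**
Under `L`-smoothness, the gradient-noise assumptions and the mixing matrix assumptions, if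
the step-size satisfies `γ < 1/(4L)`, then for every `k` the Gossip-PGA iterates satisfy
`E f(x̄⁽ᵏ⁺¹⁾) ≤ E f(x̄⁽ᵏ⁾) − (γ/4) E‖∇f(x̄⁽ᵏ⁾)‖² + γ²Lσ²/(2n)
   + (3γL²/(4n)) E‖X⁽ᵏ⁾ − X̄⁽ᵏ⁾‖_F²`. -/
theorem gossip_pga_descent_lemma_nonconvex
    {Ω : Type*} [mΩ : MeasurableSpace Ω] (μ : Measure Ω) [IsProbabilityMeasure μ]
    (d n : ℕ) (hn : 0 < n)
    (f : Fin n → EuclideanSpace ℝ (Fin d) → ℝ)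
    (grad : Fin n → EuclideanSpace ℝ (Fin d) → EuclideanSpace ℝ (Fin d))
    (L σ β γ : ℝ) (H : ℕ)
    (hL : 0 < L) (hσ : 0 ≤ σ) (hβ0 : 0 < β) (hβ1 : β < 1) (hγ0 : 0 < γ) (hH : 0 < H)
    -- smoothness
    (hdiff : ∀ i z, HasGradientAt (f i) (grad i z) z)
    (hsmooth : ∀ i y z, ‖grad i y - grad i z‖ ≤ L * ‖y - z‖)
    -- mixing matrix assumptions
    (W : Matrix (Fin n) (Fin n) ℝ)
    (hWpos : ∀ i j, 0 ≤ W i j)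
    (hWrow : ∀ i, ∑ j, W i j = 1)
    (hWcol : ∀ j, ∑ i, W i j = 1)
    (hWnull : ∀ v : Fin n → ℝ, (1 - W).mulVec v = 0 → ∃ c : ℝ, v = fun _ => c)
    (hWnorm : ∀ v : Fin n → ℝ,
      Real.sqrt (∑ i, (W.mulVec v i - (∑ j, v j) / n) ^ 2) ≤ β * Real.sqrt (∑ i, v i ^ 2))
    -- the stochastic process: iterates and stochastic gradients, with their filtration
    (ℱ : ℕ → MeasurableSpace Ω) (hℱle : ∀ k, ℱ k ≤ mΩ) (hℱmono : Monotone ℱ)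
    (x g : ℕ → Fin n → Ω → EuclideanSpace ℝ (Fin d))
    (hx_adapted : ∀ k i, StronglyMeasurable[ℱ k] (x k i))
    (hg_adapted : ∀ k i, StronglyMeasurable[ℱ (k + 1)] (g k i))
    (hx_L2 : ∀ k i, MemLp (x k i) 2 μ)
    (hg_L2 : ∀ k i, MemLp (g k i) 2 μ)
    -- all initial values coincide
    (hx0 : ∀ i j ω, x 0 i ω = x 0 j ω)
    -- gradient-noise assumptions
    (hmean : ∀ k i, μ[fun ω => g k i ω - grad i (x k i ω) | ℱ k] =ᵐ[μ] 0)
    (hvar : ∀ k i, ∀ᵐ ω ∂μ,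
      (μ[fun ω => ‖g k i ω - grad i (x k i ω)‖ ^ 2 | ℱ k]) ω ≤ σ ^ 2)
    (hindep : ∀ k, ∀ i j, i ≠ j →
      μ[fun ω => ⟪g k i ω - grad i (x k i ω), g k j ω - grad j (x k j ω)⟫ | ℱ k]
        =ᵐ[μ] 0)
    -- the Gossip-PGA recursion with averaging period `H`
    (hrec_gossip : ∀ k i ω, (k + 1) % H ≠ 0 →
      x (k + 1) i ω = ∑ j, W i j • (x k j ω - γ • g k j ω))
    (hrec_avg : ∀ k i ω, (k + 1) % H = 0 →
      x (k + 1) i ω = (n : ℝ)⁻¹ • ∑ j, (x k j ω - γ • g k j ω))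
    -- integrability of the function values
    (hfint : ∀ k, Integrable
      (fun ω => (n : ℝ)⁻¹ * ∑ i, f i ((n : ℝ)⁻¹ • ∑ j, x k j ω)) μ)
    -- step-size condition
    (hγ : γ < 1 / (4 * L)) :
    ∀ k : ℕ,
      (∫ ω, (n : ℝ)⁻¹ * ∑ i, f i ((n : ℝ)⁻¹ • ∑ j, x (k + 1) j ω) ∂μ) ≤
        (∫ ω, (n : ℝ)⁻¹ * ∑ i, f i ((n : ℝ)⁻¹ • ∑ j, x k j ω) ∂μ)
        - γ / 4 * (∫ ω, ‖(n : ℝ)⁻¹ • ∑ i, grad i ((n : ℝ)⁻¹ • ∑ j, x k j ω)‖ ^ 2 ∂μ)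
        + γ ^ 2 * L * σ ^ 2 / (2 * n)
        + 3 * γ * L ^ 2 / (4 * n)
            * (∫ ω, (∑ i, ‖x k i ω - (n : ℝ)⁻¹ • ∑ j, x k j ω‖ ^ 2) ∂μ) :=
  gossip_pga_descent_lemma_nonconvex_general (mΩ := mΩ) μ d n hn f grad L σ γ H hL hγ0 hdiff hsmooth
    W hWcol ℱ hℱle x g hx_adapted hx_L2 hg_L2 hmean hvar hindep hrec_gossip hrec_avg hfint hγ
end

section
/- (Upper bound on the averaged gradient deviation.) Let f_1, …, f_n : ℝ^d → ℝ be convex and L-smooth, let f = (1/n)∑_{i=1}^n f_i, and let x* be a global minimizer of f. Then for any γ > 0 and any points x_1, …, x_n ∈ ℝ^d with average x̄ = (1/n)∑_i x_i, γ²·‖(1/n)·∑_{i=1}^n [∇f_i(x_i) − ∇f_i(x*)]‖² ≤ (2·γ²·L²/n)·∑_{i=1}^n ‖x_i − x̄‖² + 4·L·γ²·(f(x̄) − f(x*)). -/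
/-!
Split the averaged deviation at `x̄`. The spread part `n⁻¹ ∑ᵢ (∇fᵢ(xᵢ) − ∇fᵢ(x̄))` is bounded by
Jensen's inequality for `‖·‖²` and the Lipschitz bound on each `∇fᵢ`. The central part
`∇f(x̄) − ∇f(x*)` is bounded by co-coercivity at the minimizer of the `L`-smooth average `f`,
which follows from the descent lemma applied to a gradient step of length `1 / L`.
Then `‖a + b‖² ≤ 2‖a‖² + 2‖b‖²`.
-/

open Finset

section Smooth

variable {E : Type*} [NormedAddCommGroup E] [InnerProductSpace ℝ E] [CompleteSpace E]
  {F : E → ℝ} {G : E → E} {L : ℝ}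

theorem HasGradientAt.hasDerivAt_comp_add_smul {g z v : E} {t : ℝ}
    (h : HasGradientAt F g (z + t • v)) :
    HasDerivAt (fun s : ℝ => F (z + s • v)) (inner ℝ g v) t := by
  have hline : HasDerivAt (fun s : ℝ => z + s • v) v t := by
    simpa using ((hasDerivAt_id t).smul_const v).const_add z
  exact (hasGradientAt_iff_hasFDerivAt.1 h).comp_hasDerivAt t hline

theorem HasGradientAt.eq_zero_of_isLocalMin {g x : E} (h : HasGradientAt F g x)
    (hmin : IsLocalMin F x) : g = 0 :=
  (InnerProductSpace.toDual ℝ E).map_eq_zero_iff.1 <|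
    hmin.hasFDerivAt_eq_zero (hasGradientAt_iff_hasFDerivAt.1 h)

theorem le_add_inner_add_sq_of_lipschitz_gradient (hF : ∀ z, HasGradientAt F (G z) z)
    (hG : ∀ y z, ‖G y - G z‖ ≤ L * ‖y - z‖) (z v : E) :
    F (z + v) ≤ F z + inner ℝ (G z) v + L / 2 * ‖v‖ ^ 2 := by
  -- the claim is `ψ 0 ≤ ψ 1`, and `ψ` is monotone on `[0, ∞)`
  set ψ : ℝ → ℝ := fun t => t * inner ℝ (G z) v + L / 2 * t ^ 2 * ‖v‖ ^ 2 - F (z + t • v)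
  set ψ' : ℝ → ℝ := fun t => inner ℝ (G z) v + L * t * ‖v‖ ^ 2 - inner ℝ (G (z + t • v)) v
  have hderiv : ∀ t, HasDerivAt ψ (ψ' t) t := fun t => by
    have hquad : HasDerivAt (fun t : ℝ => L / 2 * t ^ 2 * ‖v‖ ^ 2) (L * t * ‖v‖ ^ 2) t :=
      (((hasDerivAt_pow 2 t).const_mul (L / 2)).mul_const (‖v‖ ^ 2)).congr_deriv (by ring)
    exact (((hasDerivAt_id t).mul_const _).add hquad).sub (hF _).hasDerivAt_comp_add_smul
      |>.congr_deriv (by simp [ψ'])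
  have hnonneg : ∀ t ∈ interior (Set.Ici (0 : ℝ)), 0 ≤ ψ' t := by
    intro t ht
    rw [interior_Ici, Set.mem_Ioi] at ht
    have hlip : ‖G (z + t • v) - G z‖ ≤ L * (t * ‖v‖) := by
      simpa [norm_smul, abs_of_pos ht] using hG (z + t • v) z
    have hcs := real_inner_le_norm (G (z + t • v) - G z) v
    rw [inner_sub_left] at hcs
    nlinarith [norm_nonneg v]
  have hmono : MonotoneOn ψ (Set.Ici 0) :=
    monotoneOn_of_hasDerivWithinAt_nonneg (convex_Ici 0)
      (fun t _ => (hderiv t).continuousAt.continuousWithinAt)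
      (fun t _ => (hderiv t).hasDerivWithinAt) hnonneg
  have hψ := hmono Set.self_mem_Ici (Set.mem_Ici.2 zero_le_one) zero_le_one
  norm_num [ψ] at hψ
  linarith

theorem norm_gradient_sub_sq_le_of_forall_le (hL : 0 < L)
    (hF : ∀ z, HasGradientAt F (G z) z) (hG : ∀ y z, ‖G y - G z‖ ≤ L * ‖y - z‖)
    {xstar : E} (hmin : ∀ z, F xstar ≤ F z) (w : E) :
    ‖G w - G xstar‖ ^ 2 ≤ 2 * L * (F w - F xstar) := by
  have hstar : G xstar = 0 :=
    (hF xstar).eq_zero_of_isLocalMin (Filter.Eventually.of_forall hmin)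
  rw [hstar, sub_zero]
  -- one gradient step of length `1 / L` from `w` descends by `‖G w‖² / (2L)`
  have hstep := le_add_inner_add_sq_of_lipschitz_gradient hF hG w ((-L⁻¹) • G w)
  rw [inner_smul_right, real_inner_self_eq_norm_sq, norm_smul, norm_neg, Real.norm_eq_abs,
    abs_of_pos (inv_pos.2 hL)] at hstep
  have hdescent : F xstar ≤ F w - ‖G w‖ ^ 2 / (2 * L) :=
    calc F xstar ≤ F (w + (-L⁻¹) • G w) := hmin _
      _ ≤ F w + -L⁻¹ * ‖G w‖ ^ 2 + L / 2 * (L⁻¹ * ‖G w‖) ^ 2 := hstep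
      _ = F w - ‖G w‖ ^ 2 / (2 * L) := by field_simp; ring
  rw [le_sub_comm, div_le_iff₀ (by positivity)] at hdescent
  linarith

end Smooth

section Average

variable {ι E : Type*} [NormedAddCommGroup E] [InnerProductSpace ℝ E]

theorem HasGradientAt.const_mul_sum [CompleteSpace E] {f : ι → E → ℝ} {g : ι → E} {x : E}
    (s : Finset ι) (c : ℝ) (h : ∀ i ∈ s, HasGradientAt (f i) (g i) x) :
    HasGradientAt (fun z => c * ∑ i ∈ s, f i z) (c • ∑ i ∈ s, g i) x := by
  rw [hasGradientAt_iff_hasFDerivAt, map_smul, map_sum]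
  exact (HasFDerivAt.fun_sum fun i hi => hasGradientAt_iff_hasFDerivAt.1 (h i hi)).const_mul c

theorem norm_inv_card_smul_sum_le (s : Finset ι) {v : ι → E} {C : ℝ} (hC : 0 ≤ C)
    (hv : ∀ i ∈ s, ‖v i‖ ≤ C) : ‖(#s : ℝ)⁻¹ • ∑ i ∈ s, v i‖ ≤ C := by
  rw [norm_smul, norm_inv, Real.norm_natCast]
  calc (#s : ℝ)⁻¹ * ‖∑ i ∈ s, v i‖ ≤ (#s : ℝ)⁻¹ * (#s * C) := by
        gcongr
        exact (norm_sum_le _ _).trans (by simpa using sum_le_sum hv)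
    _ ≤ C := by
        rw [← mul_assoc]
        exact mul_le_of_le_one_left hC (inv_mul_le_one_of_le₀ le_rfl (Nat.cast_nonneg _))

theorem norm_inv_card_smul_sum_sq_le (s : Finset ι) (v : ι → E) :
    ‖(#s : ℝ)⁻¹ • ∑ i ∈ s, v i‖ ^ 2 ≤ (#s : ℝ)⁻¹ * ∑ i ∈ s, ‖v i‖ ^ 2 := by
  rw [norm_smul, norm_inv, Real.norm_natCast, mul_pow]
  calc (#s : ℝ)⁻¹ ^ 2 * ‖∑ i ∈ s, v i‖ ^ 2
      ≤ (#s : ℝ)⁻¹ ^ 2 * (#s * ∑ i ∈ s, ‖v i‖ ^ 2) := by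
        gcongr
        exact (pow_le_pow_left₀ (norm_nonneg _) (norm_sum_le _ _) 2).trans
          (sq_sum_le_card_mul_sum_sq ..)
    _ = (#s : ℝ)⁻¹ * ∑ i ∈ s, ‖v i‖ ^ 2 := by
        rcases eq_or_ne (#s : ℝ) 0 with h | h
        · simp [h]
        · field_simp

end Average

theorem averaged_gradient_deviation_upper_bound_general
    (d n : ℕ)
    (f : Fin n → EuclideanSpace ℝ (Fin d) → ℝ)
    (grad : Fin n → EuclideanSpace ℝ (Fin d) → EuclideanSpace ℝ (Fin d))
    (L : ℝ) (hL : 0 < L)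
    (hdiff : ∀ i z, HasGradientAt (f i) (grad i z) z)
    (hsmooth : ∀ i y z, ‖grad i y - grad i z‖ ≤ L * ‖y - z‖)
    (xstar : EuclideanSpace ℝ (Fin d))
    (hmin : ∀ z, (n : ℝ)⁻¹ * ∑ i, f i xstar ≤ (n : ℝ)⁻¹ * ∑ i, f i z)
    (γ : ℝ)
    (x : Fin n → EuclideanSpace ℝ (Fin d)) :
    γ ^ 2 * ‖(n : ℝ)⁻¹ • ∑ i, (grad i (x i) - grad i xstar)‖ ^ 2 ≤
      2 * γ ^ 2 * L ^ 2 / n * ∑ i, ‖x i - (n : ℝ)⁻¹ • ∑ j, x j‖ ^ 2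
      + 4 * L * γ ^ 2 * ((n : ℝ)⁻¹ * ∑ i, f i ((n : ℝ)⁻¹ • ∑ j, x j)
          - (n : ℝ)⁻¹ * ∑ i, f i xstar) := by
  set xbar := (n : ℝ)⁻¹ • ∑ j, x j
  set G := fun z => (n : ℝ)⁻¹ • ∑ i, grad i z
  have hG : ∀ z, HasGradientAt (fun z => (n : ℝ)⁻¹ * ∑ i, f i z) (G z) z := fun z =>
    HasGradientAt.const_mul_sum _ _ fun i _ => hdiff i z
  have hGlip : ∀ y z, ‖G y - G z‖ ≤ L * ‖y - z‖ := fun y z => by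
    simpa [G, ← smul_sub, ← sum_sub_distrib] using
      norm_inv_card_smul_sum_le univ (by positivity) fun i _ => hsmooth i y z
  have hcentral : ‖G xbar - G xstar‖ ^ 2 ≤ 2 * L * ((n : ℝ)⁻¹ * ∑ i, f i xbar
      - (n : ℝ)⁻¹ * ∑ i, f i xstar) :=
    norm_gradient_sub_sq_le_of_forall_le hL hG hGlip hmin xbar
  have hspread : ‖(n : ℝ)⁻¹ • ∑ i, (grad i (x i) - grad i xbar)‖ ^ 2
      ≤ (n : ℝ)⁻¹ * (L ^ 2 * ∑ i, ‖x i - xbar‖ ^ 2) := by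
    calc _ ≤ (n : ℝ)⁻¹ * ∑ i, ‖grad i (x i) - grad i xbar‖ ^ 2 := by
          simpa using norm_inv_card_smul_sum_sq_le univ fun i => grad i (x i) - grad i xbar
      _ ≤ (n : ℝ)⁻¹ * ∑ i, (L * ‖x i - xbar‖) ^ 2 := by
          gcongr with i
          exact hsmooth i (x i) xbar
      _ = _ := by simp only [mul_pow, mul_sum]
  have hsplit : (n : ℝ)⁻¹ • ∑ i, (grad i (x i) - grad i xstar)
      = (n : ℝ)⁻¹ • ∑ i, (grad i (x i) - grad i xbar) + (G xbar - G xstar) := by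
    simp only [G, sum_sub_distrib, smul_sub]
    abel
  rw [hsplit]
  calc _ ≤ γ ^ 2 * (2 * (‖(n : ℝ)⁻¹ • ∑ i, (grad i (x i) - grad i xbar)‖ ^ 2
          + ‖G xbar - G xstar‖ ^ 2)) := by
        gcongr
        exact (pow_le_pow_left₀ (norm_nonneg _) (norm_add_le _ _) 2).trans add_sq_le
    _ ≤ γ ^ 2 * (2 * ((n : ℝ)⁻¹ * (L ^ 2 * ∑ i, ‖x i - xbar‖ ^ 2) + 2 * L *
          ((n : ℝ)⁻¹ * ∑ i, f i xbar - (n : ℝ)⁻¹ * ∑ i, f i xstar))) := by gcongr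
    _ = _ := by ring

/-- **Upper bound on the averaged gradient deviation.**
Let `f₁, …, fₙ : ℝ^d → ℝ` be convex and `L`-smooth, `f = (1/n) ∑ fᵢ`, and `x*` a global
minimizer of `f`.  Then for any `γ > 0` and points `x₁, …, xₙ` with average `x̄`,
`γ² ‖(1/n) ∑ᵢ [∇fᵢ(xᵢ) − ∇fᵢ(x*)]‖² ≤ (2γ²L²/n) ∑ᵢ ‖xᵢ − x̄‖² + 4Lγ² (f(x̄) − f(x*))`. -/
theorem averaged_gradient_deviation_upper_bound
    (d n : ℕ) (hn : 0 < n)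
    (f : Fin n → EuclideanSpace ℝ (Fin d) → ℝ)
    (grad : Fin n → EuclideanSpace ℝ (Fin d) → EuclideanSpace ℝ (Fin d))
    (L : ℝ) (hL : 0 < L)
    (hdiff : ∀ i z, HasGradientAt (f i) (grad i z) z)
    (hconv : ∀ i, ConvexOn ℝ Set.univ (f i))
    (hsmooth : ∀ i y z, ‖grad i y - grad i z‖ ≤ L * ‖y - z‖)
    (xstar : EuclideanSpace ℝ (Fin d))
    (hmin : ∀ z, (n : ℝ)⁻¹ * ∑ i, f i xstar ≤ (n : ℝ)⁻¹ * ∑ i, f i z)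
    (γ : ℝ) (hγ : 0 < γ)
    (x : Fin n → EuclideanSpace ℝ (Fin d)) :
    γ ^ 2 * ‖(n : ℝ)⁻¹ • ∑ i, (grad i (x i) - grad i xstar)‖ ^ 2 ≤
      2 * γ ^ 2 * L ^ 2 / n * ∑ i, ‖x i - (n : ℝ)⁻¹ • ∑ j, x j‖ ^ 2
      + 4 * L * γ ^ 2 * ((n : ℝ)⁻¹ * ∑ i, f i ((n : ℝ)⁻¹ • ∑ j, x j)
          - (n : ℝ)⁻¹ * ∑ i, f i xstar) :=
  averaged_gradient_deviation_upper_bound_general d n f grad L hL hdiff hsmooth xstar hmin γ x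
end
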